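/- arXiv:math/0008180 — 2 statements merged into one kernel-verified Lean document; each statement's English description precedes it below -/
import Mathlib

section
/- For every integer n ≥ 1, the formal power series A_n(z)·cos_q(z) + z·B_n(z)·sin_q(z) over K = ℚ(q) has vanishing coefficient of z^m for every integer m with 0 ≤ m ≤ 2n; that is, A_n·cos_q + z·B_n·sin_q = O(z^{2n+1}). -/
noncomputable section

/-- The field `K = ℚ(q)` of rational functions over `ℚ`. -/
abbrev K : Type := RatFunc ℚ

/-- The indeterminate `q`. -/
def q : K := RatFunc.X

/-- The `q`-integer `[m]_q = (1 - q^m)/(1 - q)`, for any integer `m`. -/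
def qint (m : ℤ) : K := (1 - q ^ m) / (1 - q)

/-- The `q`-factorial `[n]_q! = [1]_q [2]_q ⋯ [n]_q`. -/
def qfact : ℕ → K
  | 0 => 1
  | n + 1 => qfact n * qint (n + 1)

/-- `b 0 = 0` and `b n = [2n-1]_q q^{(-1)^(n-1) n(n-1)/2 - n + 1}` for `n ≥ 1`. -/
def b (n : ℕ) : K :=
  if n = 0 then 0
  else qint (2 * n - 1) *
    q ^ ((-1 : ℤ) ^ (n - 1) * ((n : ℤ) * ((n : ℤ) - 1) / 2) - (n : ℤ) + 1)

/-- `A m` is the polynomial `A_{m-1}` of the paper (index shifted by one, so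
`A 0 = A_{-1} = 1`, `A 1 = A_0 = 0`). -/
def A : ℕ → Polynomial K
  | 0 => 1
  | 1 => 0
  | (n + 2) => Polynomial.C (b (n + 1)) * A (n + 1) - Polynomial.X ^ 2 * A n

/-- `B m` is the polynomial `B_{m-1}` of the paper (index shifted by one, so
`B 0 = B_{-1} = 0`, `B 1 = B_0 = 1`). -/
def B : ℕ → Polynomial K
  | 0 => 0
  | 1 => 1
  | (n + 2) => Polynomial.C (b (n + 1)) * B (n + 1) - Polynomial.X ^ 2 * B n

/-- `c n j` is the coefficient of `z^(2j)` in `A_n` (and `0` for `j < 0`). -/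
def c (n : ℤ) (j : ℤ) : K :=
  if j < 0 then 0 else (A (n + 1).toNat).coeff (2 * j).toNat

/-- `d n j` is the coefficient of `z^(2j)` in `B_n` (and `0` for `j < 0`). -/
def d (n : ℤ) (j : ℤ) : K :=
  if j < 0 then 0 else (B (n + 1).toNat).coeff (2 * j).toNat

/-- `sin_q(z) = ∑ (-1)^n q^(n^2) z^(2n+1)/[2n+1]_q!` as a formal power series. -/
def sinq : PowerSeries K :=
  PowerSeries.mk fun m =>
    if m % 2 = 1 then (-1 : K) ^ (m / 2) * q ^ ((m / 2) ^ 2) / qfact m else 0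

/-- `cos_q(z) = ∑ (-1)^n q^(n^2) z^(2n)/[2n]_q!` as a formal power series. -/
def cosq : PowerSeries K :=
  PowerSeries.mk fun m =>
    if m % 2 = 0 then (-1 : K) ^ (m / 2) * q ^ ((m / 2) ^ 2) / qfact m else 0

/-- The `q`-Pochhammer symbol `(a; p)_m = (1-a)(1-ap)⋯(1-ap^(m-1))`. -/
def qpoch (a p : K) : ℕ → K
  | 0 => 1
  | m + 1 => qpoch a p m * (1 - a * p ^ m)



/-! ### Auxiliary development -/

lemma q_ne_zero : q ≠ 0 := RatFunc.X_ne_zero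

lemma q_pow_ne_one {n : ℕ} (hn : 1 ≤ n) : q ^ n ≠ 1 := by
  intro h
  have : (algebraMap (Polynomial ℚ) (RatFunc ℚ)) (Polynomial.X ^ n) =
      (algebraMap (Polynomial ℚ) (RatFunc ℚ)) 1 := by
    simpa [q, map_pow] using h
  have h2 := RatFunc.algebraMap_injective ℚ this
  have := congrArg Polynomial.natDegree h2
  simp [Polynomial.natDegree_X_pow] at this
  omega

lemma one_sub_q_ne_zero : (1 : K) - q ≠ 0 := by
  intro h
  have : q ^ 1 = 1 := by rw [pow_one]; linear_combination -h
  exact q_pow_ne_one le_rfl this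

lemma qint_natCast_ne_zero {k : ℕ} (hk : 1 ≤ k) : qint (k : ℤ) ≠ 0 := by
  rw [qint, div_ne_zero_iff]
  refine ⟨?_, one_sub_q_ne_zero⟩
  rw [zpow_natCast]
  intro h
  exact q_pow_ne_one hk (by linear_combination -h)

lemma qfact_ne_zero (n : ℕ) : qfact n ≠ 0 := by
  induction n with
  | zero => simp [qfact]
  | succ n ih =>
    rw [qfact]
    exact mul_ne_zero ih (by exact_mod_cast qint_natCast_ne_zero (Nat.succ_le_succ n.zero_le))

lemma qint_mul_one_sub_q (k : ℤ) : qint k * (1 - q) = 1 - q ^ k := by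
  rw [qint, div_mul_cancel₀ _ one_sub_q_ne_zero]

/-- key q-power identity -/
lemma hsum (s t : ℤ) : (1 : K) - q ^ (s + t) = (1 - q ^ s) * q ^ t + (1 - q ^ t) := by
  rw [zpow_add₀ q_ne_zero]
  ring

/-- Exponent of `q` in the closed formula for the coefficients. -/
def gE (m j : ℕ) : ℤ :=
  if m % 2 = 0 then ((j : ℤ) - (m : ℤ) / 2) ^ 2 + (m : ℤ) / 2 * ((m : ℤ) - 1)
  else ((j : ℤ) - (m : ℤ) / 2 - 1) ^ 2

/-- Product of the odd `q`-integers `[2j-1][2j-3]⋯[2j-2m+1]`. -/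
def Pd (m j : ℕ) : K := ∏ t ∈ Finset.range m, qint (2 * (j : ℤ) - 2 * t - 1)

/-- Closed formula for the coefficient of `z^(2j)` in
`A (m-1) cos_q + z B (m-1) sin_q` (file indexing). -/
def Ecoef (m j : ℕ) : K :=
  if j < m then 0
  else (-1 : K) ^ (j + m) * q ^ gE m j / (qfact (2 * j - 2 * m) * Pd m j)

lemma Pd_ne_zero {m j : ℕ} (h : m ≤ j) : Pd m j ≠ 0 := by
  rw [Pd]
  apply Finset.prod_ne_zero_iff.2
  intro t ht
  rw [Finset.mem_range] at ht
  have h1 : (1 : ℕ) ≤ 2 * j - 2 * t - 1 := by omega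
  have : (2 * (j : ℤ) - 2 * t - 1) = ((2 * j - 2 * t - 1 : ℕ) : ℤ) := by push_cast; omega
  rw [this]
  exact qint_natCast_ne_zero h1

lemma Pd_succ (m j : ℕ) : Pd (m + 1) j = Pd m j * qint (2 * (j : ℤ) - 2 * m - 1) := by
  rw [Pd, Finset.prod_range_succ, Pd]

lemma Pd_succ' (m j : ℕ) (hj : 1 ≤ j) :
    Pd (m + 1) j = qint (2 * (j : ℤ) - 1) * Pd m (j - 1) := by
  have hc : ∀ t ∈ Finset.range m,
      qint (2 * (j : ℤ) - 2 * ((t : ℕ) + 1 : ℕ) - 1) = qint (2 * ((j - 1 : ℕ) : ℤ) - 2 * t - 1) := by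
    intro t _
    congr 1
    push_cast [Nat.cast_sub hj]
    ring
  rw [Pd, Finset.prod_range_succ', Finset.prod_congr rfl hc, Pd, mul_comm]
  norm_num

lemma qint_combine1 (s t x : ℤ) :
    qint t * q ^ x + qint s * q ^ (x + t) = qint (s + t) * q ^ x := by
  rw [qint, qint, qint, zpow_add₀ q_ne_zero x t, zpow_add₀ q_ne_zero s t]
  field_simp
  ring

lemma qint_combine2 (s t x : ℤ) :
    qint t * q ^ (x + s) + qint s * q ^ x = qint (s + t) * q ^ x := by
  rw [qint, qint, qint, zpow_add₀ q_ne_zero x s, zpow_add₀ q_ne_zero s t]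
  field_simp
  ring

lemma b_succ_eq (m : ℕ) :
    b (m + 1) = qint (2 * (m : ℤ) + 1) *
      q ^ ((-1 : ℤ) ^ m * (((m : ℤ) + 1) * m / 2) - m) := by
  rw [b, if_neg (Nat.succ_ne_zero m)]
  congr 2
  · push_cast; ring
  · have h1 : m + 1 - 1 = m := rfl
    have h2 : ((m + 1 : ℕ) : ℤ) * (((m + 1 : ℕ) : ℤ) - 1) = ((m : ℤ) + 1) * m := by
      push_cast; ring
    rw [h1, h2]
    push_cast
    ring

/-- The key three-term identity (★). -/
lemma star (m j : ℕ) (hj : m + 2 ≤ j) :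
    qint (2 * (j : ℤ) - 2 * m - 2) * q ^ gE (m + 2) j + b (m + 1) * q ^ gE (m + 1) j
      = qint (2 * (j : ℤ) - 1) * q ^ gE m (j - 1) := by
  have hj1 : ((j - 1 : ℕ) : ℤ) = (j : ℤ) - 1 := by
    have : 1 ≤ j := by omega
    omega
  rw [b_succ_eq, mul_assoc, ← zpow_add₀ q_ne_zero]
  rcases Nat.even_or_odd m with ⟨a, ha⟩ | ⟨a, ha⟩
  · -- m = 2a even
    subst ha
    have e1 : gE (a + a + 2) j = gE (a + a) (j - 1) + (2 * (a + a : ℕ) + 1) := by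
      rw [gE, gE, if_pos (by omega), if_pos (by omega), hj1]
      have d1 : ((a + a + 2 : ℕ) : ℤ) / 2 = a + 1 := by push_cast; omega
      have d2 : ((a + a : ℕ) : ℤ) / 2 = a := by push_cast; omega
      rw [d1, d2]
      push_cast
      ring
    have e2 : (-1 : ℤ) ^ (a + a) * ((((a + a : ℕ) : ℤ) + 1) * (a + a : ℕ) / 2) - (a + a : ℕ)
        + gE (a + a + 1) j = gE (a + a) (j - 1) := by
      rw [gE, gE, if_neg (by omega), if_pos (by omega), hj1]
      have d1 : ((a + a + 1 : ℕ) : ℤ) / 2 = a := by push_cast; omega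
      have d2 : ((a + a : ℕ) : ℤ) / 2 = a := by push_cast; omega
      have d3 : (((a + a : ℕ) : ℤ) + 1) * (a + a : ℕ) / 2 = (2 * a + 1) * a := by
        push_cast
        rw [show ((a : ℤ) + a + 1) * (a + a) = (2 * a + 1) * a * 2 by ring]
        exact Int.mul_ediv_cancel _ two_ne_zero
      have hneg : (-1 : ℤ) ^ (a + a) = 1 := Even.neg_one_pow ⟨a, rfl⟩
      rw [d1, d2, d3, hneg]
      push_cast
      ring
    rw [e1, e2]
    have e3 : (2 : ℤ) * j - 1 = (2 * (a + a : ℕ) + 1) + (2 * (j : ℤ) - 2 * (a + a : ℕ) - 2) := by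
      push_cast; ring
    rw [e3]
    exact qint_combine2 (2 * ((a + a : ℕ) : ℤ) + 1) (2 * (j : ℤ) - 2 * (a + a : ℕ) - 2) _
  · -- m = 2a+1 odd
    subst ha
    have e1 : gE (2 * a + 1 + 2) j = gE (2 * a + 1) (j - 1) := by
      rw [gE, gE, if_neg (by omega), if_neg (by omega), hj1]
      have d1 : ((2 * a + 1 + 2 : ℕ) : ℤ) / 2 = a + 1 := by push_cast; omega
      have d2 : ((2 * a + 1 : ℕ) : ℤ) / 2 = a := by push_cast; omega
      rw [d1, d2]
      ring
    have e2 : (-1 : ℤ) ^ (2 * a + 1) * ((((2 * a + 1 : ℕ) : ℤ) + 1) * (2 * a + 1 : ℕ) / 2)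
        - (2 * a + 1 : ℕ) + gE (2 * a + 1 + 1) j
        = gE (2 * a + 1) (j - 1) + (2 * (j : ℤ) - 2 * (2 * a + 1 : ℕ) - 2) := by
      rw [gE, gE, if_pos (by omega), if_neg (by omega), hj1]
      have d1 : ((2 * a + 1 + 1 : ℕ) : ℤ) / 2 = a + 1 := by push_cast; omega
      have d2 : ((2 * a + 1 : ℕ) : ℤ) / 2 = a := by push_cast; omega
      have d3 : (((2 * a + 1 : ℕ) : ℤ) + 1) * (2 * a + 1 : ℕ) / 2 = (a + 1) * (2 * a + 1) := by
        push_cast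
        rw [show ((2 * a + 1 : ℤ) + 1) * (2 * a + 1) = (a + 1) * (2 * a + 1) * 2 by ring]
        exact Int.mul_ediv_cancel _ two_ne_zero
      have hneg : (-1 : ℤ) ^ (2 * a + 1) = -1 := Odd.neg_one_pow ⟨a, by omega⟩
      rw [d1, d2, d3, hneg]
      push_cast
      ring
    rw [e1, e2]
    have e3 : (2 : ℤ) * j - 1 = (2 * (2 * a + 1 : ℕ) + 1) + (2 * (j : ℤ) - 2 * (2 * a + 1 : ℕ) - 2) := by
      push_cast; ring
    rw [e3]
    exact qint_combine1 (2 * ((2 * a + 1 : ℕ) : ℤ) + 1) (2 * (j : ℤ) - 2 * (2 * a + 1 : ℕ) - 2) _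

lemma qint_pos_ne_zero {e : ℤ} (he : 1 ≤ e) : qint e ≠ 0 := by
  lift e to ℕ using (by omega)
  exact qint_natCast_ne_zero (by exact_mod_cast he)

lemma diag_exp (m : ℕ) :
    (-1 : ℤ) ^ m * (((m : ℤ) + 1) * m / 2) - m + gE (m + 1) (m + 1) = gE m m := by
  rcases Nat.even_or_odd m with ⟨a, ha⟩ | ⟨a, ha⟩
  · subst ha
    rw [gE, gE, if_neg (by omega), if_pos (by omega)]
    have d1 : ((a + a + 1 : ℕ) : ℤ) / 2 = a := by push_cast; omega
    have d2 : ((a + a : ℕ) : ℤ) / 2 = a := by push_cast; omega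
    have d3 : (((a + a : ℕ) : ℤ) + 1) * (a + a : ℕ) / 2 = (2 * a + 1) * a := by
      push_cast
      rw [show ((a : ℤ) + a + 1) * (a + a) = (2 * a + 1) * a * 2 by ring]
      exact Int.mul_ediv_cancel _ two_ne_zero
    rw [d1, d2, d3, Even.neg_one_pow ⟨a, rfl⟩]
    push_cast
    ring
  · subst ha
    rw [gE, gE, if_pos (by omega), if_neg (by omega)]
    have d1 : ((2 * a + 1 + 1 : ℕ) : ℤ) / 2 = a + 1 := by push_cast; omega
    have d2 : ((2 * a + 1 : ℕ) : ℤ) / 2 = a := by push_cast; omega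
    have d3 : (((2 * a + 1 : ℕ) : ℤ) + 1) * (2 * a + 1 : ℕ) / 2 = (a + 1) * (2 * a + 1) := by
      push_cast
      rw [show ((2 * a + 1 : ℤ) + 1) * (2 * a + 1) = (a + 1) * (2 * a + 1) * 2 by ring]
      exact Int.mul_ediv_cancel _ two_ne_zero
    rw [d1, d2, d3, Odd.neg_one_pow ⟨a, by omega⟩]
    push_cast
    ring

lemma diag (m : ℕ) : b (m + 1) * Ecoef (m + 1) (m + 1) = Ecoef m m := by
  have hP : Pd (m + 1) (m + 1) = qint (2 * (m : ℤ) + 1) * Pd m m := by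
    rw [Pd_succ' m (m + 1) (by omega), Nat.add_sub_cancel,
      show (2 * ((m + 1 : ℕ) : ℤ) - 1) = 2 * (m : ℤ) + 1 from by push_cast; ring]
  have hq1 : qint (2 * (m : ℤ) + 1) ≠ 0 := qint_pos_ne_zero (by omega)
  have hPm : Pd m m ≠ 0 := Pd_ne_zero le_rfl
  rw [Ecoef, if_neg (lt_irrefl (m + 1)), Ecoef, if_neg (lt_irrefl m), b_succ_eq, hP]
  rw [show 2 * (m + 1) - 2 * (m + 1) = 0 by omega, show 2 * m - 2 * m = 0 by omega]
  rw [show ((-1 : K)) ^ ((m + 1) + (m + 1)) = 1 from Even.neg_one_pow ⟨m + 1, by omega⟩,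
    show ((-1 : K)) ^ (m + m) = 1 from Even.neg_one_pow ⟨m, by omega⟩]
  rw [← diag_exp m, zpow_add₀ q_ne_zero]
  simp only [qfact, one_mul]
  field_simp

lemma estep (m j : ℕ) (hj : m + 2 ≤ j) :
    Ecoef (m + 2) j = b (m + 1) * Ecoef (m + 1) j - Ecoef m (j - 1) := by
  have key := star m j hj
  have hfact2 : qfact (2 * j - 2 * m - 2) =
      qfact (2 * j - 2 * m - 4) * (qint (2 * (j : ℤ) - 2 * m - 3) * qint (2 * (j : ℤ) - 2 * m - 2)) := by
    rw [show 2 * j - 2 * m - 2 = (2 * j - 2 * m - 4) + 1 + 1 by omega, qfact, qfact, mul_assoc]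
    congr 2
    · congr 1; omega
    · congr 1; omega
  have hP2 : Pd (m + 2) j =
      qint (2 * (j : ℤ) - 1) * Pd m (j - 1) * qint (2 * (j : ℤ) - 2 * m - 3) := by
    rw [Pd_succ (m + 1) j, Pd_succ' m j (by omega)]
    congr 1
    congr 1
    push_cast
    ring
  have hP1 : Pd (m + 1) j = qint (2 * (j : ℤ) - 1) * Pd m (j - 1) := Pd_succ' m j (by omega)
  rw [Ecoef, if_neg (by omega), Ecoef, if_neg (by omega), Ecoef, if_neg (by omega)]
  rw [show 2 * j - 2 * (m + 2) = 2 * j - 2 * m - 4 by omega,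
    show 2 * j - 2 * (m + 1) = 2 * j - 2 * m - 2 by omega,
    show 2 * (j - 1) - 2 * m = 2 * j - 2 * m - 2 by omega]
  rw [hfact2, hP2, hP1]
  rw [show j + (m + 2) = (j + m) + 1 + 1 by omega, show j + (m + 1) = (j + m) + 1 by omega,
    show (j - 1) + m = (j + m) - 1 by omega, show j + m = ((j + m) - 1) + 1 by omega]
  rw [pow_succ, pow_succ, pow_succ]
  set F := qfact (2 * j - 2 * m - 4) with hF
  set P := Pd m (j - 1) with hPdef
  set u1 := qint (2 * (j : ℤ) - 2 * m - 3) with hu1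
  set u2 := qint (2 * (j : ℤ) - 2 * m - 2) with hu2
  set v := qint (2 * (j : ℤ) - 1) with hv
  set t := ((-1 : K)) ^ (j + m - 1) with ht
  have hu1n : u1 ≠ 0 := qint_pos_ne_zero (by omega)
  have hu2n : u2 ≠ 0 := qint_pos_ne_zero (by omega)
  have hvn : v ≠ 0 := qint_pos_ne_zero (by omega)
  have hFn : F ≠ 0 := qfact_ne_zero _
  have hPn : P ≠ 0 := Pd_ne_zero (by omega)
  field_simp
  rw [Nat.add_sub_cancel, ← ht]
  linear_combination (-t) * key

/-- The combination `A_{m-1} cos_q + z B_{m-1} sin_q` as a power series. -/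
def Gs (m : ℕ) : PowerSeries K :=
  (A m : PowerSeries K) * cosq + PowerSeries.X * (B m : PowerSeries K) * sinq

lemma Gs_rec (m : ℕ) :
    Gs (m + 2) = PowerSeries.C (b (m + 1)) * Gs (m + 1) - PowerSeries.X ^ 2 * Gs m := by
  rw [Gs, Gs, Gs, A, B, Polynomial.coe_sub, Polynomial.coe_sub, Polynomial.coe_mul,
    Polynomial.coe_mul, Polynomial.coe_mul, Polynomial.coe_mul, Polynomial.coe_C,
    Polynomial.coe_pow, Polynomial.coe_X]
  ring

lemma coeff_Gs_rec (m k : ℕ) :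
    PowerSeries.coeff k (Gs (m + 2)) =
      b (m + 1) * PowerSeries.coeff k (Gs (m + 1)) -
        if 2 ≤ k then PowerSeries.coeff (k - 2) (Gs m) else 0 := by
  rw [Gs_rec, map_sub, PowerSeries.coeff_C_mul, PowerSeries.coeff_X_pow_mul']

lemma Gs_zero : Gs 0 = cosq := by
  rw [Gs, A, B, Polynomial.coe_one, Polynomial.coe_zero]
  ring

lemma Gs_one : Gs 1 = PowerSeries.X * sinq := by
  rw [Gs, A, B, Polynomial.coe_one, Polynomial.coe_zero]
  ring

lemma qfact_succ' (n : ℕ) : qfact (n + 1) = qfact n * qint ((n : ℤ) + 1) := rfl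

lemma Pd_one (j : ℕ) : Pd 1 j = qint (2 * (j : ℤ) - 1) := by
  rw [Pd, Finset.prod_range_one]
  norm_num

lemma coeff_Gs (m : ℕ) : ∀ j : ℕ,
    PowerSeries.coeff (2 * j) (Gs m) = Ecoef m j ∧
      PowerSeries.coeff (2 * j + 1) (Gs m) = 0 := by
  induction m using Nat.twoStepInduction with
  | zero =>
    intro j
    rw [Gs_zero]
    constructor
    · rw [cosq, PowerSeries.coeff_mk, if_pos (by omega), Ecoef, if_neg (by omega)]
      rw [show 2 * j / 2 = j by omega, show 2 * j - 2 * 0 = 2 * j by omega]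
      rw [gE, if_pos (by omega)]
      norm_num [Pd]
      rw [show ((j : ℤ))^2 = ((j ^ 2 : ℕ) : ℤ) by push_cast; ring, zpow_natCast]
    · rw [cosq, PowerSeries.coeff_mk, if_neg (by omega)]
  | one =>
    intro j
    rw [Gs_one]
    constructor
    · match j with
      | 0 =>
        rw [show 2 * 0 = 0 by rfl, PowerSeries.coeff_zero_X_mul, Ecoef, if_pos (by omega)]
      | i + 1 =>
        rw [show 2 * (i + 1) = (2 * i + 1) + 1 by omega, PowerSeries.coeff_succ_X_mul]
        rw [sinq, PowerSeries.coeff_mk, if_pos (by omega), Ecoef, if_neg (by omega)]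
        rw [show (2 * i + 1) / 2 = i by omega, show 2 * (i + 1) - 2 * 1 = 2 * i by omega]
        rw [gE, if_neg (by omega), Pd_one]
        rw [show 2 * i + 1 = 2 * i + 1 by rfl, qfact_succ' (2 * i)]
        rw [show ((i + 1 : ℕ) : ℤ) - ((1 : ℕ) : ℤ) / 2 - 1 = (i : ℤ) by push_cast; omega]
        rw [show ((i : ℤ))^2 = ((i ^ 2 : ℕ) : ℤ) by push_cast; ring, zpow_natCast]
        rw [show (-1 : K) ^ (i + 1 + 1) = (-1 : K) ^ i by rw [pow_succ, pow_succ]; ring]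
        rw [show (2 * ((i + 1 : ℕ) : ℤ) - 1) = ((2 * i : ℕ) : ℤ) + 1 by push_cast; ring]
    · rw [show 2 * j + 1 = (2 * j) + 1 by rfl, PowerSeries.coeff_succ_X_mul]
      rw [sinq, PowerSeries.coeff_mk, if_neg (by omega)]
  | more m ih ih1 =>
    intro j
    constructor
    · rw [coeff_Gs_rec, (ih1 j).1]
      rcases Nat.lt_or_ge j 1 with hj | hj
      · -- j = 0
        interval_cases j
        rw [if_neg (by omega), Ecoef, if_pos (by omega), Ecoef, if_pos (by omega)]
        ring
      · rw [if_pos (by omega), show 2 * j - 2 = 2 * (j - 1) by omega, (ih (j - 1)).1]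
        rcases Nat.lt_or_ge j (m + 1) with hj2 | hj2
        · rw [Ecoef, if_pos (by omega), Ecoef, if_pos (by omega), Ecoef, if_pos (by omega)]
          ring
        · rcases Nat.lt_or_ge j (m + 2) with hj3 | hj3
          · -- j = m + 1
            have hjm : j = m + 1 := by omega
            subst hjm
            rw [Nat.add_sub_cancel, diag m, sub_self, Ecoef, if_pos (by omega)]
          · exact (estep m j hj3).symm
    · rw [coeff_Gs_rec, (ih1 j).2, mul_zero]
      rcases Nat.lt_or_ge j 1 with hj | hj
      · interval_cases j
        rw [if_neg (by omega)]
        ring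
      · rw [if_pos (by omega), show 2 * j + 1 - 2 = 2 * (j - 1) + 1 by omega, (ih (j - 1)).2]
        ring

/-- For every `n ≥ 1`, the power series `A_n(z)·cos_q(z) + z·B_n(z)·sin_q(z)`
has vanishing coefficients of `z^m` for all `0 ≤ m ≤ 2n`,
i.e. `A_n cos_q + z B_n sin_q = O(z^(2n+1))`. -/
theorem continuants_vanish (n : ℕ) (hn : 1 ≤ n) (m : ℕ) (hm : m ≤ 2 * n) :
    PowerSeries.coeff (R := K) m
      ((A (n + 1) : PowerSeries K) * cosq +
        PowerSeries.X * (B (n + 1) : PowerSeries K) * sinq) = 0 := by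
  show PowerSeries.coeff m (Gs (n + 1)) = 0
  rcases Nat.even_or_odd m with ⟨j, hj⟩ | ⟨j, hj⟩
  · rw [show m = 2 * j by omega, (coeff_Gs (n + 1) j).1, Ecoef, if_pos (by omega)]
  · rw [show m = 2 * j + 1 by omega]
    exact (coeff_Gs (n + 1) j).2
end
end

section
/- For all integers n ≥ 1 and k ≥ 2, the following identity holds in K = ℚ(q): ( ∑_{j=0}^{⌈(n−4)/2⌉} s(n,k,j) ) · (q;q²)_n · q · (1−q^{2k−1})(1−q^{2k−2})(1−q^{9−2k}) / ( (1−q)(1−q³)(1−q⁵) ) − (1−q^{2k−1})·(q³;q²)_{n−1} − (−1)^n · q^{(−1+(−1)^n+2k−2(−1)^n k+2n−4kn+4n²)/4} · (q^{2k−2n};q²)_n + (q;q²)_n + χ(n)·(1−q^{2k−1})·q^{n(2n−2k+1)/2}·(q^{2k−2n+2};q²)_{n−1} = 0, where χ(n) = 1 if n is even and χ(n) = 0 if n is odd, the sum is empty when ⌈(n−4)/2⌉ < 0, and the summand is s(n,k,j) = [ (q^{−2k+6};q⁴)_j · (q^{−2k+4};q⁴)_j · (q^{17−2k};q⁸)_j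 ] / [ (q⁷;q⁴)_j · (q⁹;q⁴)_j · (q^{9−2k};q⁸)_j ] · q^{(2k−1)j}. -/
noncomputable section

/-! Write `W_n` for the factor multiplying the sum and `R_n` for minus the remaining four terms,
so that the claim is `(∑_{j < ⌊(n-1)/2⌋} s_j) W_n = R_n`. From `n = 2t+1` to `n = 2t+2` the sum
is unchanged and both `W` and `R` pick up the factor `1 - q^{4t+3}`. From `n = 2t+2` to
`n = 2t+3` the term `s_t` enters the sum, `W` and `R` pick up `1 - q^{4t+5}`, and `R` also gains
`(1 - q^{2k-1}) J_t`, where `J_t = (q^{2k-4t-2}; q²)_{2t+1} q^{e_t} (q^{2k-4t-4} - q^{4t+5})`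
and `e_t = 4t² + 9t + 5 - 2k(t+1)`. So everything reduces to the closed form
`s_t W_{2t+3} = (1 - q^{2k-1}) J_t`, which holds because `J_t` satisfies the same first-order
recurrence as `s_t`: the factor `q^{2k-4t-4} - q^{4t+5} = q^{2k-4t-4} (1 - q^{8t+9-2k})`
cancels the new factor of the denominator `(q^{9-2k}; q⁸)_{t+1}`. -/

section ZPow

variable {F : Type*} [Field F] {x : F}

lemma zpow_mul_zpow_of_add_eq (hx : x ≠ 0) {a b c : ℤ} (h : a + b = c) :
    x ^ a * x ^ b = x ^ c := by
  rw [← zpow_add₀ hx, h]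

lemma zpow_sub_zpow_of_add_eq (hx : x ≠ 0) {a b c : ℤ} (h : a + c = b) :
    x ^ a - x ^ b = x ^ a * (1 - x ^ c) := by
  rw [mul_sub, mul_one, zpow_mul_zpow_of_add_eq hx h]

lemma one_sub_zpow_of_add_eq_zero (hx : x ≠ 0) {a c : ℤ} (h : a + c = 0) :
    1 - x ^ a = -(x ^ a * (1 - x ^ c)) := by
  rw [← zpow_sub_zpow_of_add_eq hx h, zpow_zero, neg_sub]

lemma zpow_mul_pow_pow (hx : x ≠ 0) (a : ℤ) (c i : ℕ) :
    x ^ a * (x ^ c) ^ i = x ^ (a + c * i) := by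
  rw [zpow_add₀ hx, ← pow_mul, ← zpow_natCast]
  push_cast; rfl

lemma RatFunc.intDegree_X_zpow (m : ℤ) : ((RatFunc.X : RatFunc F) ^ m).intDegree = m := by
  have hX : (RatFunc.X : RatFunc F) ≠ 0 := RatFunc.X_ne_zero
  induction m using Int.induction_on with
  | zero => simp [RatFunc.intDegree_one]
  | succ i ih =>
    rw [zpow_add_one₀ hX, RatFunc.intDegree_mul (zpow_ne_zero _ hX) hX, ih,
      RatFunc.intDegree_X]
  | pred i ih =>
    rw [zpow_sub_one₀ hX, RatFunc.intDegree_mul (zpow_ne_zero _ hX) (inv_ne_zero hX), ih,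
      RatFunc.intDegree_inv, RatFunc.intDegree_X, sub_eq_add_neg]

end ZPow

lemma q_zpow_injective : Function.Injective (q ^ · : ℤ → K) := fun a b h => by
  simpa only [q, RatFunc.intDegree_X_zpow] using congrArg RatFunc.intDegree h

lemma one_sub_q_zpow_ne_zero {m : ℤ} (h : m ≠ 0) : 1 - q ^ m ≠ 0 :=
  sub_ne_zero.mpr <| by simpa only [zpow_zero] using q_zpow_injective.ne h.symm

lemma qpoch_succ_left (a p : K) (m : ℕ) :
    qpoch a p (m + 1) = (1 - a) * qpoch (a * p) p m := by
  induction m with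
  | zero => simp [qpoch]
  | succ m ih => rw [qpoch, ih, qpoch, mul_assoc a, ← pow_succ']; ring

lemma qpoch_zpow_succ (a : ℤ) (c m : ℕ) {e : ℤ} (h : a + c * m = e) :
    qpoch (q ^ a) (q ^ c) (m + 1) = qpoch (q ^ a) (q ^ c) m * (1 - q ^ e) := by
  rw [qpoch, zpow_mul_pow_pow q_ne_zero, h]

lemma qpoch_zpow_succ_left (a : ℤ) (c m : ℕ) {e : ℤ} (h : a + c = e) :
    qpoch (q ^ a) (q ^ c) (m + 1) = (1 - q ^ a) * qpoch (q ^ e) (q ^ c) m := by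
  rw [qpoch_succ_left, ← pow_one (q ^ c), zpow_mul_pow_pow q_ne_zero, Nat.cast_one, mul_one, h]

def summand (k : ℤ) (j : ℕ) : K :=
  qpoch (q ^ (-2 * k + 6)) (q ^ 4) j * qpoch (q ^ (-2 * k + 4)) (q ^ 4) j *
      qpoch (q ^ (17 - 2 * k)) (q ^ 8) j /
    (qpoch (q ^ 7) (q ^ 4) j * qpoch (q ^ 9) (q ^ 4) j * qpoch (q ^ (9 - 2 * k)) (q ^ 8) j) *
    q ^ ((2 * k - 1) * (j : ℤ))

def weight (k : ℤ) (n : ℕ) : K :=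
  qpoch q (q ^ 2) n * q * (1 - q ^ (2 * k - 1)) * (1 - q ^ (2 * k - 2)) *
    (1 - q ^ (9 - 2 * k)) / ((1 - q) * (1 - q ^ 3) * (1 - q ^ 5))

def rhs (k : ℤ) (n : ℕ) : K :=
  (1 - q ^ (2 * k - 1)) * qpoch (q ^ 3) (q ^ 2) (n - 1)
    + (-1 : K) ^ n *
        q ^ ((-1 + (-1 : ℤ) ^ n + 2 * k - 2 * (-1 : ℤ) ^ n * k + 2 * (n : ℤ) -
              4 * k * (n : ℤ) + 4 * (n : ℤ) ^ 2) / 4) *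
        qpoch (q ^ (2 * k - 2 * (n : ℤ))) (q ^ 2) n
    - qpoch q (q ^ 2) n
    - (if Even n then (1 : K) else 0) * (1 - q ^ (2 * k - 1)) *
        q ^ ((n : ℤ) * (2 * (n : ℤ) - 2 * k + 1) / 2) *
        qpoch (q ^ (2 * k - 2 * (n : ℤ) + 2)) (q ^ 2) (n - 1)

-- Both exponents of `q` in `rhs k (2 * t + 2)` evaluate to this.
def evenExp (k : ℤ) (t : ℕ) : ℤ := 4 * t ^ 2 + 9 * t + 5 - 2 * k * t - 2 * k

def jump (k : ℤ) (t : ℕ) : K :=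
  qpoch (q ^ (2 * k - 4 * t - 2)) (q ^ 2) (2 * t + 1) * q ^ evenExp k t *
    (q ^ (2 * k - 4 * t - 4) - q ^ (4 * (t : ℤ) + 5))

lemma evenExp_succ (k : ℤ) (t : ℕ) :
    evenExp k (t + 1) = evenExp k t + (8 * t + 13 - 2 * k) := by
  simp only [evenExp]; push_cast; ring

lemma summand_succ (k : ℤ) (t : ℕ) :
    summand k (t + 1) = summand k t *
      ((1 - q ^ (4 * (t : ℤ) + 6 - 2 * k)) * (1 - q ^ (4 * (t : ℤ) + 4 - 2 * k)) *
        (1 - q ^ (8 * (t : ℤ) + 17 - 2 * k))) /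
      ((1 - q ^ (4 * (t : ℤ) + 7)) * (1 - q ^ (4 * (t : ℤ) + 9)) *
        (1 - q ^ (8 * (t : ℤ) + 9 - 2 * k))) * q ^ (2 * k - 1) := by
  simp only [summand, ← zpow_ofNat q 7, ← zpow_ofNat q 9]
  rw [qpoch_zpow_succ _ _ _ (e := 4 * t + 6 - 2 * k) (by ring),
    qpoch_zpow_succ _ _ _ (e := 4 * t + 4 - 2 * k) (by ring),
    qpoch_zpow_succ _ _ _ (e := 8 * t + 17 - 2 * k) (by ring),
    qpoch_zpow_succ _ _ _ (e := 4 * t + 7) (by push_cast; ring),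
    qpoch_zpow_succ _ _ _ (e := 4 * t + 9) (by push_cast; ring),
    qpoch_zpow_succ _ _ _ (e := 8 * t + 9 - 2 * k) (by ring),
    ← zpow_mul_zpow_of_add_eq q_ne_zero
      (show (2 * k - 1) * (t : ℤ) + (2 * k - 1) = (2 * k - 1) * ↑(t + 1) by push_cast; ring)]
  simp only [div_eq_mul_inv, mul_inv]
  ring

lemma weight_succ (k : ℤ) (n : ℕ) :
    weight k (n + 1) = weight k n * (1 - q ^ (2 * (n : ℤ) + 1)) := by
  have h : (q : K) * (q ^ 2) ^ n = q ^ (2 * (n : ℤ) + 1) := by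
    rw [← pow_mul, ← pow_succ', ← zpow_natCast]; push_cast; ring_nf
  simp only [weight, qpoch, h]
  ring

lemma rhs_odd (k : ℤ) (t : ℕ) :
    rhs k (2 * t + 1) = (1 - q ^ (2 * k - 1)) * qpoch (q ^ (3 : ℤ)) (q ^ 2) (2 * t)
      - q ^ evenExp k t * q ^ (2 * k - 4 * t - 4) *
          qpoch (q ^ (2 * k - 4 * t - 2)) (q ^ 2) (2 * t + 1)
      - qpoch (q ^ (1 : ℤ)) (q ^ 2) (2 * t + 1) := by
  have hexp : (-1 + (-1 : ℤ) ^ (2 * t + 1) + 2 * k - 2 * (-1 : ℤ) ^ (2 * t + 1) * k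
      + 2 * ((2 * t + 1 : ℕ) : ℤ) - 4 * k * ((2 * t + 1 : ℕ) : ℤ)
      + 4 * ((2 * t + 1 : ℕ) : ℤ) ^ 2) / 4 = evenExp k t + (2 * k - 4 * t - 4) := by
    rw [Odd.neg_one_pow ⟨t, rfl⟩, evenExp]; push_cast; ring_nf; omega
  have hodd : ¬ Even (2 * t + 1) := Nat.not_even_iff_odd.mpr ⟨t, rfl⟩
  rw [rhs, hexp, if_neg hodd, Odd.neg_one_pow ⟨t, rfl⟩, zpow_add₀ q_ne_zero, Nat.add_sub_cancel,
    show 2 * k - 2 * ((2 * t + 1 : ℕ) : ℤ) = 2 * k - 4 * t - 2 by push_cast; ring,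
    zpow_ofNat, zpow_one]
  ring

lemma rhs_even (k : ℤ) (t : ℕ) :
    rhs k (2 * t + 2) = (1 - q ^ (2 * k - 1)) * qpoch (q ^ (3 : ℤ)) (q ^ 2) (2 * t + 1)
      + q ^ evenExp k t * qpoch (q ^ (2 * k - 4 * t - 4)) (q ^ 2) (2 * t + 2)
      - qpoch (q ^ (1 : ℤ)) (q ^ 2) (2 * t + 2)
      - (1 - q ^ (2 * k - 1)) * q ^ evenExp k t *
          qpoch (q ^ (2 * k - 4 * t - 2)) (q ^ 2) (2 * t + 1) := by
  have hE : (-1 + (-1 : ℤ) ^ (2 * t + 2) + 2 * k - 2 * (-1 : ℤ) ^ (2 * t + 2) * k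
      + 2 * ((2 * t + 2 : ℕ) : ℤ) - 4 * k * ((2 * t + 2 : ℕ) : ℤ)
      + 4 * ((2 * t + 2 : ℕ) : ℤ) ^ 2) / 4 = evenExp k t := by
    rw [Even.neg_one_pow ⟨t + 1, by ring⟩, evenExp]; push_cast; ring_nf; omega
  have hF : ((2 * t + 2 : ℕ) : ℤ) * (2 * ((2 * t + 2 : ℕ) : ℤ) - 2 * k + 1) / 2
      = evenExp k t := by
    rw [evenExp]; push_cast; ring_nf; omega
  rw [rhs, hE, hF, if_pos ⟨t + 1, by ring⟩, Even.neg_one_pow ⟨t + 1, by ring⟩,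
    show 2 * t + 2 - 1 = 2 * t + 1 by omega,
    show 2 * k - 2 * ((2 * t + 2 : ℕ) : ℤ) = 2 * k - 4 * t - 4 by push_cast; ring,
    show 2 * k - 4 * (t : ℤ) - 4 + 2 = 2 * k - 4 * t - 2 by ring, zpow_ofNat, zpow_one]
  ring

lemma rhs_one (k : ℤ) : rhs k 1 = 0 := by
  rw [← zero_add 1, ← mul_zero 2, rhs_odd]
  simp only [qpoch, evenExp, Nat.cast_zero, mul_zero, sub_zero, add_zero, zero_add, ne_eq,
    OfNat.ofNat_ne_zero, not_false_eq_true, zero_pow, pow_zero, mul_one]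
  linear_combination zpow_mul_zpow_of_add_eq q_ne_zero (show 1 + (2 * k - 2) = 2 * k - 1 by ring)
    - (1 - q ^ (2 * k - 2)) *
      zpow_mul_zpow_of_add_eq q_ne_zero (show 5 - 2 * k + (2 * k - 4) = 1 by ring)

lemma rhs_even_eq_rhs_odd_mul (k : ℤ) (t : ℕ) :
    rhs k (2 * t + 2) = rhs k (2 * t + 1) * (1 - q ^ (4 * (t : ℤ) + 3)) := by
  rw [rhs_even, rhs_odd, show 2 * t + 2 = 2 * t + 1 + 1 from rfl,
    qpoch_zpow_succ 3 2 (2 * t) (e := 4 * t + 3) (by push_cast; ring),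
    qpoch_zpow_succ_left _ 2 (2 * t + 1) (e := 2 * k - 4 * t - 2) (by ring),
    qpoch_zpow_succ 1 2 (2 * t + 1) (e := 4 * t + 3) (by push_cast; ring)]
  linear_combination -(q ^ evenExp k t * qpoch (q ^ (2 * k - 4 * t - 2)) (q ^ 2) (2 * t + 1)) *
    zpow_mul_zpow_of_add_eq q_ne_zero (show 2 * k - 4 * t - 4 + (4 * t + 3) = 2 * k - 1 by ring)

lemma rhs_odd_succ (k : ℤ) (t : ℕ) :
    rhs k (2 * t + 3) =
      rhs k (2 * t + 2) * (1 - q ^ (4 * (t : ℤ) + 5)) + (1 - q ^ (2 * k - 1)) * jump k t := by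
  have h := rhs_odd k (t + 1)
  rw [show 2 * (t + 1) + 1 = 2 * t + 3 by ring, show 2 * (t + 1) = 2 * t + 1 + 1 by ring,
    evenExp_succ, zpow_add₀ q_ne_zero, mul_assoc (q ^ evenExp k t),
    zpow_mul_zpow_of_add_eq q_ne_zero
      (show 8 * t + 13 - 2 * k + (2 * k - 4 * ↑(t + 1) - 4) = 4 * t + 5 by push_cast; ring),
    show 2 * k - 4 * ((t + 1 : ℕ) : ℤ) - 2 = 2 * k - 4 * t - 6 by push_cast; ring,
    show 2 * t + 3 = 2 * t + 1 + 1 + 1 from rfl,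
    qpoch_zpow_succ_left (2 * k - 4 * t - 6) 2 (2 * t + 1 + 1) (e := 2 * k - 4 * t - 4) (by ring),
    qpoch_zpow_succ_left (2 * k - 4 * t - 4) 2 (2 * t + 1) (e := 2 * k - 4 * t - 2) (by ring),
    qpoch_zpow_succ 3 2 (2 * t + 1) (e := 4 * t + 5) (by push_cast; ring),
    qpoch_zpow_succ 1 2 (2 * t + 1 + 1) (e := 4 * t + 5) (by push_cast; ring)] at h
  rw [h, rhs_even, jump, show 2 * t + 2 = 2 * t + 1 + 1 from rfl,
    qpoch_zpow_succ_left (2 * k - 4 * t - 4) 2 (2 * t + 1) (e := 2 * k - 4 * t - 2) (by ring)]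
  linear_combination (q ^ evenExp k t * qpoch (q ^ (2 * k - 4 * t - 2)) (q ^ 2) (2 * t + 1) *
      (1 - q ^ (2 * k - 4 * t - 4))) *
    zpow_mul_zpow_of_add_eq q_ne_zero (show 4 * t + 5 + (2 * k - 4 * t - 6) = 2 * k - 1 by ring)

lemma jump_succ (k : ℤ) (t : ℕ) :
    jump k (t + 1) * (1 - q ^ (8 * (t : ℤ) + 9 - 2 * k)) =
      jump k t * ((1 - q ^ (4 * (t : ℤ) + 6 - 2 * k)) * (1 - q ^ (4 * (t : ℤ) + 4 - 2 * k)) *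
        (1 - q ^ (8 * (t : ℤ) + 17 - 2 * k))) * q ^ (2 * k - 1) := by
  have hmon : q ^ (8 * (t : ℤ) + 13 - 2 * k) * q ^ (2 * k - 4 * t - 8) =
      q ^ (2 * k - 4 * t - 4) * q ^ (4 * (t : ℤ) + 6 - 2 * k) * q ^ (4 * (t : ℤ) + 4 - 2 * k) *
        q ^ (2 * k - 1) := by
    simp only [← zpow_add₀ q_ne_zero]; ring_nf
  rw [jump, jump, evenExp_succ, zpow_add₀ q_ne_zero,
    show 2 * (t + 1) + 1 = 2 * t + 1 + 1 + 1 by ring,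
    show 2 * k - 4 * ((t + 1 : ℕ) : ℤ) - 2 = 2 * k - 4 * t - 6 by push_cast; ring,
    show 2 * k - 4 * ((t + 1 : ℕ) : ℤ) - 4 = 2 * k - 4 * t - 8 by push_cast; ring,
    show 4 * ((t + 1 : ℕ) : ℤ) + 5 = 4 * t + 9 by push_cast; ring,
    qpoch_zpow_succ_left (2 * k - 4 * t - 6) 2 (2 * t + 1 + 1) (e := 2 * k - 4 * t - 4) (by ring),
    qpoch_zpow_succ_left (2 * k - 4 * t - 4) 2 (2 * t + 1) (e := 2 * k - 4 * t - 2) (by ring),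
    zpow_sub_zpow_of_add_eq q_ne_zero
      (show 2 * k - 4 * t - 8 + (8 * t + 17 - 2 * k) = 4 * t + 9 by ring),
    zpow_sub_zpow_of_add_eq q_ne_zero
      (show 2 * k - 4 * t - 4 + (8 * t + 9 - 2 * k) = 4 * t + 5 by ring),
    one_sub_zpow_of_add_eq_zero q_ne_zero
      (show 4 * (t : ℤ) + 6 - 2 * k + (2 * k - 4 * t - 6) = 0 by ring),
    one_sub_zpow_of_add_eq_zero q_ne_zero
      (show 4 * (t : ℤ) + 4 - 2 * k + (2 * k - 4 * t - 4) = 0 by ring)]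
  linear_combination ((1 - q ^ (2 * k - 4 * t - 6)) * (1 - q ^ (2 * k - 4 * t - 4)) *
    qpoch (q ^ (2 * k - 4 * t - 2)) (q ^ 2) (2 * t + 1) * q ^ evenExp k t *
    (1 - q ^ (8 * (t : ℤ) + 9 - 2 * k)) * (1 - q ^ (8 * (t : ℤ) + 17 - 2 * k))) * hmon

lemma summand_zero_mul_weight_three (k : ℤ) :
    summand k 0 * weight k 3 = (1 - q ^ (2 * k - 1)) * jump k 0 := by
  have h135 : (1 - q) * (1 - q ^ 3) * (1 - q ^ 5) ≠ 0 := by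
    simpa only [zpow_one, zpow_ofNat, pow_one] using
      mul_ne_zero (mul_ne_zero (one_sub_q_zpow_ne_zero (by norm_num : (1 : ℤ) ≠ 0))
        (one_sub_q_zpow_ne_zero (by norm_num : (3 : ℤ) ≠ 0)))
        (one_sub_q_zpow_ne_zero (by norm_num : (5 : ℤ) ≠ 0))
  have hq : q ^ (5 - 2 * k) * (q ^ (2 * k - 4) - q ^ (5 : ℤ)) = q * (1 - q ^ (9 - 2 * k)) := by
    rw [zpow_sub_zpow_of_add_eq q_ne_zero (show 2 * k - 4 + (9 - 2 * k) = 5 by ring), ← mul_assoc,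
      zpow_mul_zpow_of_add_eq q_ne_zero (show 5 - 2 * k + (2 * k - 4) = 1 by ring), zpow_one]
  simp only [summand, weight, jump, qpoch, evenExp, Nat.cast_zero, mul_zero, sub_zero, add_zero,
    zero_add, ne_eq, OfNat.ofNat_ne_zero, not_false_eq_true, zero_pow, pow_zero, mul_one, one_mul,
    zpow_zero, div_one, pow_one]
  rw [show q * q ^ 2 = q ^ 3 by ring, show q * (q ^ 2) ^ 2 = q ^ 5 by ring, div_eq_iff h135]
  linear_combination -((1 - q ^ (2 * k - 1)) * (1 - q ^ (2 * k - 2)) *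
    ((1 - q) * (1 - q ^ 3) * (1 - q ^ 5))) * hq

lemma summand_mul_weight (k : ℤ) (t : ℕ) :
    summand k t * weight k (2 * t + 3) = (1 - q ^ (2 * k - 1)) * jump k t := by
  induction t with
  | zero => exact summand_zero_mul_weight_three k
  | succ t ih =>
    have hD : (1 - q ^ (4 * (t : ℤ) + 7)) * (1 - q ^ (4 * (t : ℤ) + 9)) *
        (1 - q ^ (8 * (t : ℤ) + 9 - 2 * k)) ≠ 0 :=
      mul_ne_zero (mul_ne_zero (one_sub_q_zpow_ne_zero (by omega))
        (one_sub_q_zpow_ne_zero (by omega))) (one_sub_q_zpow_ne_zero (by omega))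
    rw [summand_succ, show 2 * (t + 1) + 3 = 2 * t + 3 + 1 + 1 by ring, weight_succ, weight_succ,
      show 2 * ((2 * t + 3 : ℕ) : ℤ) + 1 = 4 * t + 7 by push_cast; ring,
      show 2 * ((2 * t + 3 + 1 : ℕ) : ℤ) + 1 = 4 * t + 9 by push_cast; ring,
      div_mul_eq_mul_div, div_mul_eq_mul_div, div_eq_iff hD]
    linear_combination ((1 - q ^ (4 * (t : ℤ) + 6 - 2 * k)) *
        (1 - q ^ (4 * (t : ℤ) + 4 - 2 * k)) * (1 - q ^ (8 * (t : ℤ) + 17 - 2 * k)) *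
        q ^ (2 * k - 1) * (1 - q ^ (4 * (t : ℤ) + 7)) * (1 - q ^ (4 * (t : ℤ) + 9))) * ih
      - ((1 - q ^ (2 * k - 1)) * (1 - q ^ (4 * (t : ℤ) + 7)) * (1 - q ^ (4 * (t : ℤ) + 9))) *
        jump_succ k t

lemma sum_summand_mul_weight_odd (k : ℤ) (t : ℕ) :
    (∑ j ∈ Finset.range t, summand k j) * weight k (2 * t + 1) = rhs k (2 * t + 1) := by
  induction t with
  | zero => simp [rhs_one]
  | succ t ih =>
    have hW : weight k (2 * t + 3) =
        weight k (2 * t + 1) * (1 - q ^ (4 * (t : ℤ) + 3)) * (1 - q ^ (4 * (t : ℤ) + 5)) := by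
      rw [weight_succ k (2 * t + 2), weight_succ k (2 * t + 1)]; push_cast; ring_nf
    rw [Finset.sum_range_succ, show 2 * (t + 1) + 1 = 2 * t + 3 by ring, rhs_odd_succ,
      rhs_even_eq_rhs_odd_mul, ← ih, ← summand_mul_weight, hW]
    ring

lemma sum_summand_mul_weight_even (k : ℤ) (t : ℕ) :
    (∑ j ∈ Finset.range t, summand k j) * weight k (2 * t + 2) = rhs k (2 * t + 2) := by
  rw [weight_succ k (2 * t + 1), rhs_even_eq_rhs_odd_mul, ← sum_summand_mul_weight_odd]
  push_cast
  ring_nf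

theorem key_identity_general (n : ℕ) (hn : 1 ≤ n) (k : ℤ) :
    (∑ j ∈ Finset.range ((n - 1) / 2),
        qpoch (q ^ (-2 * k + 6)) (q ^ 4) j * qpoch (q ^ (-2 * k + 4)) (q ^ 4) j *
          qpoch (q ^ (17 - 2 * k)) (q ^ 8) j /
        (qpoch (q ^ 7) (q ^ 4) j * qpoch (q ^ 9) (q ^ 4) j *
          qpoch (q ^ (9 - 2 * k)) (q ^ 8) j) *
        q ^ ((2 * k - 1) * (j : ℤ))) *
      (qpoch q (q ^ 2) n * q * (1 - q ^ (2 * k - 1)) * (1 - q ^ (2 * k - 2)) *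
        (1 - q ^ (9 - 2 * k)) / ((1 - q) * (1 - q ^ 3) * (1 - q ^ 5)))
    - (1 - q ^ (2 * k - 1)) * qpoch (q ^ 3) (q ^ 2) (n - 1)
    - (-1 : K) ^ n *
        q ^ ((-1 + (-1 : ℤ) ^ n + 2 * k - 2 * (-1 : ℤ) ^ n * k + 2 * (n : ℤ) -
              4 * k * (n : ℤ) + 4 * (n : ℤ) ^ 2) / 4) *
        qpoch (q ^ (2 * k - 2 * (n : ℤ))) (q ^ 2) n
    + qpoch q (q ^ 2) n
    + (if Even n then (1 : K) else 0) * (1 - q ^ (2 * k - 1)) *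
        q ^ ((n : ℤ) * (2 * (n : ℤ) - 2 * k + 1) / 2) *
        qpoch (q ^ (2 * k - 2 * (n : ℤ) + 2)) (q ^ 2) (n - 1)
    = 0 := by
  have h : (∑ j ∈ Finset.range ((n - 1) / 2), summand k j) * weight k n = rhs k n := by
    obtain ⟨t, rfl | rfl⟩ : ∃ t, n = 2 * t + 1 ∨ n = 2 * t + 2 := ⟨(n - 1) / 2, by omega⟩
    · rw [show (2 * t + 1 - 1) / 2 = t by omega, sum_summand_mul_weight_odd]
    · rw [show (2 * t + 2 - 1) / 2 = t by omega, sum_summand_mul_weight_even]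
  simp only [summand, weight, rhs] at h
  linear_combination h

/-- The key identity (equation (6) of the paper): for all `n ≥ 1` and `k ≥ 2`,
`(∑_{j=0}^{⌈(n-4)/2⌉} s(n,k,j)) (q;q²)_n q (1-q^{2k-1})(1-q^{2k-2})(1-q^{9-2k})
  /((1-q)(1-q³)(1-q⁵))
 - (1-q^{2k-1})(q³;q²)_{n-1}
 - (-1)^n q^{(-1+(-1)^n+2k-2(-1)^n k+2n-4kn+4n²)/4} (q^{2k-2n};q²)_n
 + (q;q²)_n
 + χ(n)(1-q^{2k-1}) q^{n(2n-2k+1)/2} (q^{2k-2n+2};q²)_{n-1} = 0`,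
where `s(n,k,j) = (q^{-2k+6};q⁴)_j (q^{-2k+4};q⁴)_j (q^{17-2k};q⁸)_j
  / ((q⁷;q⁴)_j (q⁹;q⁴)_j (q^{9-2k};q⁸)_j) · q^{(2k-1)j}`,
`χ(n) = 1` for even `n`, `0` for odd `n`, and the sum has `⌈(n-4)/2⌉ + 1`
terms, i.e. `(n-1)/2` (rounded down) terms, being empty for `n ≤ 2`. -/
theorem key_identity (n : ℕ) (hn : 1 ≤ n) (k : ℤ) (hk : 2 ≤ k) :
    (∑ j ∈ Finset.range ((n - 1) / 2),
        qpoch (q ^ (-2 * k + 6)) (q ^ 4) j * qpoch (q ^ (-2 * k + 4)) (q ^ 4) j *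
          qpoch (q ^ (17 - 2 * k)) (q ^ 8) j /
        (qpoch (q ^ 7) (q ^ 4) j * qpoch (q ^ 9) (q ^ 4) j *
          qpoch (q ^ (9 - 2 * k)) (q ^ 8) j) *
        q ^ ((2 * k - 1) * (j : ℤ))) *
      (qpoch q (q ^ 2) n * q * (1 - q ^ (2 * k - 1)) * (1 - q ^ (2 * k - 2)) *
        (1 - q ^ (9 - 2 * k)) / ((1 - q) * (1 - q ^ 3) * (1 - q ^ 5)))
    - (1 - q ^ (2 * k - 1)) * qpoch (q ^ 3) (q ^ 2) (n - 1)
    - (-1 : K) ^ n *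
        q ^ ((-1 + (-1 : ℤ) ^ n + 2 * k - 2 * (-1 : ℤ) ^ n * k + 2 * (n : ℤ) -
              4 * k * (n : ℤ) + 4 * (n : ℤ) ^ 2) / 4) *
        qpoch (q ^ (2 * k - 2 * (n : ℤ))) (q ^ 2) n
    + qpoch q (q ^ 2) n
    + (if Even n then (1 : K) else 0) * (1 - q ^ (2 * k - 1)) *
        q ^ ((n : ℤ) * (2 * (n : ℤ) - 2 * k + 1) / 2) *
        qpoch (q ^ (2 * k - 2 * (n : ℤ) + 2)) (q ^ 2) (n - 1)
    = 0 :=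
  key_identity_general n hn k
end
end
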